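/- arXiv:2103.06916 — 4 statements merged into one kernel-verified Lean document; each statement's English description precedes it below -/
import Mathlib

section
/- Let G be a graph containing a simple cycle C with t vertices, satisfying the Pair Condition (d_G(c_i,c_j) = d_C(c_i,c_j) for all i,j). Suppose v is a vertex of G and i, j, k are distinct indices with d_C(c_i,c_j) + d_C(c_j,c_k) + d_C(c_i,c_k) = t and d_G(c_i,v) + d_G(c_j,v) + d_G(c_k,v) ≤ t/2. Then d_C(c_i,c_j) = d_G(c_i,v) + d_G(c_j,v), d_C(c_j,c_k) = d_G(c_j,v) + d_G(c_k,v), and d_C(c_i,c_k) = d_G(c_i,v) + d_G(c_k,v). -/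
/-- Cyclic distance (number of edges along the cycle) between indices `a b` on a `t`-cycle. -/
def cycDist (t a b : ℕ) : ℕ := min ((b + t - a) % t) ((a + t - b) % t)

namespace SimpleGraph.Connected

variable {V : Type*} {G : SimpleGraph V}

lemma dist_le_dist_add_dist_of_center (hG : G.Connected) (x y v : V) :
    G.dist x y ≤ G.dist x v + G.dist y v := by
  simpa only [dist_comm (u := v)] using hG.dist_triangle (u := x) (v := v) (w := y)

lemma dist_eq_add_of_two_mul_sum_le_perimeter (hG : G.Connected) (x y z v : V)
    (h : 2 * (G.dist x v + G.dist y v + G.dist z v) ≤ G.dist x y + G.dist y z + G.dist x z) :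
    G.dist x y = G.dist x v + G.dist y v ∧
    G.dist y z = G.dist y v + G.dist z v ∧
    G.dist x z = G.dist x v + G.dist z v := by
  have hxy := hG.dist_le_dist_add_dist_of_center x y v
  have hyz := hG.dist_le_dist_add_dist_of_center y z v
  have hxz := hG.dist_le_dist_add_dist_of_center x z v
  omega

end SimpleGraph.Connected

theorem stmt1_general {V : Type*} (G : SimpleGraph V) (hG : G.Connected) (t : ℕ)
    (c : ℕ → V)
    (hpair : ∀ a b, a < t → b < t → G.dist (c a) (c b) = cycDist t a b)
    (v : V) (i j k : ℕ) (hi : i < t) (hj : j < t) (hk : k < t)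
    (hsum : cycDist t i j + cycDist t j k + cycDist t i k = t)
    (hle : (G.dist (c i) v + G.dist (c j) v + G.dist (c k) v : ℚ) ≤ (t : ℚ) / 2) :
    cycDist t i j = G.dist (c i) v + G.dist (c j) v ∧
    cycDist t j k = G.dist (c j) v + G.dist (c k) v ∧
    cycDist t i k = G.dist (c i) v + G.dist (c k) v := by
  rw [← hpair i j hi hj, ← hpair j k hj hk, ← hpair i k hi hk] at hsum ⊢
  refine hG.dist_eq_add_of_two_mul_sum_le_perimeter _ _ _ v (hsum ▸ ?_)
  have : ((2 * (G.dist (c i) v + G.dist (c j) v + G.dist (c k) v) : ℕ) : ℚ) ≤ t := by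
    push_cast
    linarith
  exact_mod_cast this

/-- If `(G,C)` satisfies the Pair Condition, `v` is a vertex, and `i, j, k` are distinct
cycle indices with `d_C(c_i,c_j) + d_C(c_j,c_k) + d_C(c_i,c_k) = t` and
`d_G(c_i,v) + d_G(c_j,v) + d_G(c_k,v) ≤ t/2`, then the shortest paths through `v`
realize the cycle distances between `c_i`, `c_j`, `c_k`. -/
theorem stmt1 {V : Type*} (G : SimpleGraph V) (hG : G.Connected) (t : ℕ) (ht : 3 ≤ t)
    (c : ℕ → V)
    (hper : ∀ ℓ, c (ℓ + t) = c ℓ)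
    (hadj : ∀ ℓ, G.Adj (c ℓ) (c (ℓ + 1)))
    (hinj : ∀ a b, a < t → b < t → c a = c b → a = b)
    (hpair : ∀ a b, a < t → b < t → G.dist (c a) (c b) = cycDist t a b)
    (v : V) (i j k : ℕ) (hi : i < t) (hj : j < t) (hk : k < t)
    (hij : i ≠ j) (hjk : j ≠ k) (hik : i ≠ k)
    (hsum : cycDist t i j + cycDist t j k + cycDist t i k = t)
    (hle : (G.dist (c i) v + G.dist (c j) v + G.dist (c k) v : ℚ) ≤ (t : ℚ) / 2) :
    cycDist t i j = G.dist (c i) v + G.dist (c j) v ∧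
    cycDist t j k = G.dist (c j) v + G.dist (c k) v ∧
    cycDist t i k = G.dist (c i) v + G.dist (c k) v :=
  stmt1_general G hG t c hpair v i j k hi hj hk hsum hle
end

section
/- In a sketchable pocket Q = Q_{(p_i,p_j)} (with i < j < i+t), if the well-behaved sketch Λ⁺_Q does not assign vertex v to a simplex containing p_j, then either v = c_{j-1}, or there exists a triangle of the triangulation inside Q with vertices p_a, p_b, p_j where i ≤ a < b < j, such that for the pocket Q' = Q_{(p_a,p_b)} we have Λ⁺_{Q'}(v) ≠ T_{Q'}^+. -/
open scoped Classical

/-- A (recursively triangulated) pocket with lid `(p_i, p_j)`: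
either a trivial pocket consisting of the single polygon edge `(p_i, p_{i+1})`,
or a lid triangle `{p_i, p_m, p_j}` together with two child pockets. -/
inductive Pocket : ℕ → ℕ → Type where
  | triv (i : ℕ) : Pocket i (i + 1)
  | node {i m j : ℕ} (him : i < m) (hmj : m < j)
      (L : Pocket i m) (R : Pocket m j) : Pocket i j

namespace Pocket

/-- The triangles of the pocket's triangulation, encoded as the finsets of
polygon-vertex indices spanning them. -/
def tris : ∀ {i j : ℕ}, Pocket i j → Set (Finset ℕ)
  | _, _, triv _ => ∅
  | _, _, node (i := i) (m := m) (j := j) _ _ L R =>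
      insert {i, m, j} (tris L ∪ tris R)

variable {V : Type*} (G : SimpleGraph V) (c : ℕ → V)

/-- Push an interior sketch value across the lid `(p_i, p_j)`:
`none` encodes the outer triangle `T_Q^+`. -/
noncomputable def push (i j : ℕ) (f : V → Finset ℕ) (v : V) : Option (Finset ℕ) :=
  if ({i, j} : Finset ℕ) ⊆ f v ∧ ∀ u, G.Adj u v → (f u ∩ {i, j}).Nonempty then none
  else if (f v ∩ ({i, j} : Finset ℕ)).Nonempty then some (f v ∩ {i, j})
  else some (f v)

/-- The canonical interior sketch `Λ_Q`, with `∅` encoding "undefined". -/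
noncomputable def lam : ∀ {i j : ℕ}, Pocket i j → V → Finset ℕ
  | _, _, triv i, v =>
      if v = c i then {i} else if v = c (i + 1) then {i + 1} else {i, i + 1}
  | _, _, node (i := i) (m := m) (j := j) _ _ L R, v =>
      let a := (push G i m (fun u => lam L u) v).getD {i, m, j}
      let b := (push G m j (fun u => lam R u) v).getD {i, m, j}
      if (a ∩ b).Nonempty then a ∩ b
      else if b = ({i, m, j} : Finset ℕ) then a
      else if a = ({i, m, j} : Finset ℕ) then b
      else ∅

/-- The canonical well-behaved local sketch `Λ⁺_Q`; `none` encodes `T_Q^+`. -/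
noncomputable def lamPlus {i j : ℕ} (Q : Pocket i j) : V → Option (Finset ℕ) :=
  push G i j (lam G c Q)

/-- Compatibility of two local-sketch values: they must be simplices of a common
triangle (where `none` stands for the outer triangle `T_Q^+`, whose simplices inside
the pocket lie on the lid `{i, j}`). -/
def Compat {i j : ℕ} (Q : Pocket i j) :
    Option (Finset ℕ) → Option (Finset ℕ) → Prop
  | none, none => True
  | none, some s => s ⊆ ({i, j} : Finset ℕ)
  | some s, none => s ⊆ ({i, j} : Finset ℕ)
  | some s, some s' =>
      (s ⊆ ({i, j} : Finset ℕ) ∧ s' ⊆ ({i, j} : Finset ℕ)) ∨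
      ∃ T ∈ tris Q, s ⊆ T ∧ s' ⊆ T

/-- A local sketch for the pocket `Q`. -/
def IsLocalSketch {i j : ℕ} (Q : Pocket i j) (Γ : V → Option (Finset ℕ)) : Prop :=
  (∀ ℓ, i ≤ ℓ → ℓ ≤ j → Γ (c ℓ) = some {ℓ}) ∧
  (∀ v s, Γ v = some s → s.Nonempty ∧
    (s ⊆ ({i, j} : Finset ℕ) ∨ ∃ T ∈ tris Q, s ⊆ T)) ∧
  (∀ u v, G.Adj u v → Compat Q (Γ u) (Γ v))

/-- The pocket `Q` is sketchable. -/
def HasSketch {i j : ℕ} (Q : Pocket i j) : Prop :=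
  ∃ Γ, IsLocalSketch G c Q Γ

/-- `Sub P Q`: `P` is a subpocket of `Q`. -/
inductive Sub : ∀ {a b i j : ℕ}, Pocket a b → Pocket i j → Prop where
  | refl {i j : ℕ} (Q : Pocket i j) : Sub Q Q
  | left {a b i m j : ℕ} {P : Pocket a b} (him : i < m) (hmj : m < j)
      {L : Pocket i m} {R : Pocket m j} : Sub P L → Sub P (node him hmj L R)
  | right {a b i m j : ℕ} {P : Pocket a b} (him : i < m) (hmj : m < j)
      {L : Pocket i m} {R : Pocket m j} : Sub P R → Sub P (node him hmj L R)

end Pocket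

namespace Pocket

variable {V : Type*} {G : SimpleGraph V} {c : ℕ → V}

lemma right_mem_of_push_eq_some {i j : ℕ} {f : V → Finset ℕ} {v : V} {s : Finset ℕ}
    (h : push G i j f v = some s) (hj : j ∈ f v) : j ∈ s := by
  unfold push at h
  split_ifs at h <;> cases h
  · simpa using hj
  · exact hj

lemma succ_mem_lam_triv {i : ℕ} {v : V} (hv : v ≠ c i) : i + 1 ∈ lam G c (triv i) v := by
  rw [lam, if_neg hv]
  split_ifs <;> simp

lemma mem_lam_node {i m j k : ℕ} (him : i < m) (hmj : m < j) {L : Pocket i m} {R : Pocket m j}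
    {v : V} (hL : k ∈ (push G i m (lam G c L) v).getD {i, m, j})
    (hR : k ∈ (push G m j (lam G c R) v).getD {i, m, j}) :
    k ∈ lam G c (node him hmj L R) v := by
  rw [lam, if_pos ⟨k, Finset.mem_inter.2 ⟨hL, hR⟩⟩]
  exact Finset.mem_inter.2 ⟨hL, hR⟩

lemma mem_lam_node_of_lamPlus_left_eq_none {i m j : ℕ} (him : i < m) (hmj : m < j)
    {L : Pocket i m} {R : Pocket m j} {v : V} (hL : lamPlus G c L v = none)
    (hR : ∀ s, lamPlus G c R v = some s → j ∈ s) : j ∈ lam G c (node him hmj L R) v := by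
  refine mem_lam_node him hmj ?_ ?_
  · rw [show push G i m (lam G c L) v = none from hL]
    simp
  · cases h : lamPlus G c R v with
    | none => simp [show push G m j (lam G c R) v = none from h]
    | some s => simpa [show push G m j (lam G c R) v = some s from h] using hR s h

end Pocket

open Pocket in
theorem stmt5_general {V : Type*} (G : SimpleGraph V) (c : ℕ → V)
    (i j : ℕ)
    (Q : Pocket i j)
    (v : V) (s : Finset ℕ)
    (hs : lamPlus G c Q v = some s) (hjs : j ∉ s) :
    v = c (j - 1) ∨
      ∃ (a b : ℕ) (hab : a < b) (hbj : b < j) (QL : Pocket a b) (QR : Pocket b j),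
        i ≤ a ∧ Sub (Pocket.node hab hbj QL QR) Q ∧ lamPlus G c QL v ≠ none := by
  induction Q generalizing s with
  | triv i =>
    by_cases hv : v = c i
    · exact Or.inl (by simpa using hv)
    · exact (hjs (right_mem_of_push_eq_some hs (succ_mem_lam_triv hv))).elim
  | @node i m j him hmj L R _ ihR =>
    by_cases hL : lamPlus G c L v = none
    · obtain ⟨s', hR, hjs'⟩ : ∃ s', lamPlus G c R v = some s' ∧ j ∉ s' := by
        by_contra! hR
        exact hjs (right_mem_of_push_eq_some hs
          (mem_lam_node_of_lamPlus_left_eq_none him hmj hL hR))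
      obtain h | ⟨a, b, hab, hbj, QL, QR, hma, hsub, hne⟩ := ihR s' hR hjs'
      · exact Or.inl h
      · exact Or.inr ⟨a, b, hab, hbj, QL, QR, him.le.trans hma, Sub.right him hmj hsub, hne⟩
    · exact Or.inr ⟨i, m, him, hmj, L, R, le_rfl, Sub.refl _, hL⟩

open Pocket in
/-- If the well-behaved sketch `Λ⁺_Q` of a sketchable pocket `Q = Q_{(p_i,p_j)}`
(`i < j < i + t`) assigns `v` to a simplex not containing `p_j`, then `v = c_{j-1}`,
or there is a triangle `{p_a, p_b, p_j}` in `Q` with `i ≤ a < b < j` such that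
`Λ⁺_{Q'}(v) ≠ T_{Q'}^+` for the subpocket `Q' = Q_{(p_a,p_b)}`. -/
theorem stmt5 {V : Type*} (G : SimpleGraph V) (t : ℕ) (c : ℕ → V)
    (hadj : ∀ ℓ, G.Adj (c ℓ) (c (ℓ + 1)))
    (i j : ℕ) (hij : i < j) (hjt : j < i + t)
    (Q : Pocket i j) (hQ : HasSketch G c Q)
    (v : V) (s : Finset ℕ)
    (hs : lamPlus G c Q v = some s) (hjs : j ∉ s) :
    v = c (j - 1) ∨
      ∃ (a b : ℕ) (hab : a < b) (hbj : b < j) (QL : Pocket a b) (QR : Pocket b j),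
        i ≤ a ∧ Sub (Pocket.node hab hbj QL QR) Q ∧ lamPlus G c QL v ≠ none :=
  stmt5_general G c i j Q v s hs hjs
end

section
/- Let Q = Q_{(p_i,p_j)} be a pocket with i < j < i+t that admits a sketch. If Λ⁺_Q(v) ≠ T_Q^+ for some vertex v of G, then v is pulled by Q; that is, either there exists k ∈ [i,j] with d_G(v,c_k) ≤ min(k−i, j−k), or there exist k, l ∈ [i,j] with d_G(v,c_k) ≤ min(k−i+1, j−k−1) and d_G(v,c_l) ≤ min(l−i−1, j−l+1). -/
open scoped Classical

/-- `v` is pulled by the pocket `Q_{(p_i,p_j)}`. -/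
def PulledBy {V : Type*} (G : SimpleGraph V) (c : ℕ → V) (i j : ℕ) (v : V) : Prop :=
  (∃ k, i ≤ k ∧ k ≤ j ∧ G.dist v (c k) ≤ min (k - i) (j - k)) ∨
  (∃ k l, i ≤ k ∧ k ≤ j ∧ i ≤ l ∧ l ≤ j ∧
    G.dist v (c k) ≤ min (k - i + 1) (j - k - 1) ∧
    G.dist v (c l) ≤ min (l - i - 1) (j - l + 1))

/-!
Say that `v` is pulled into `[lo, hi]` when it satisfies the condition defining "pulled by
`Q_{(p_lo, p_hi)}`". By induction on the triangulation of a pocket `P` with lid `(a, b)`: if the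
corner `b` is missing from `Λ_P(v)`, then `v` is pulled into `[a, b - 1]`; if `a` is missing, into
`[a + 1, b]`; if both are, into `[a + 1, b - 1]`. The corners present in the children's values
say which child is responsible, and a vertex that `Λ⁺` does not push across a lid misses a corner
there or has a neighbour missing both, which costs one unit of distance. `Λ⁺_Q(v) ≠ T_Q^+` is
such a failure at the lid of `Q`.

Gluing the windows of the two children breaks down only when one child is a single edge, and
there the sketch is needed: every sketch places a vertex at least as far inside as `Λ` does, so a
vertex that `Λ` keeps off the lid of a child is placed strictly inside it by every sketch, and
hence is not adjacent to a corner outside that child.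
-/

/-- `PulledBy G c i j` is `PulledInto G c i j i (j + 1)`: windows `[lo, hi)` are half-open so that
moving their ends by one needs no truncated subtraction. Only corners `c_k`, `k ∈ [a, b]`, are
used. -/
def PulledInto {V : Type*} (G : SimpleGraph V) (c : ℕ → V) (a b lo hi : ℕ) (v : V) : Prop :=
  (∃ k, a ≤ k ∧ k ≤ b ∧ G.dist v (c k) + lo ≤ k ∧ G.dist v (c k) + k < hi) ∨
  (∃ k l, a ≤ k ∧ k ≤ b ∧ a ≤ l ∧ l ≤ b ∧
    G.dist v (c k) + lo ≤ k + 1 ∧ G.dist v (c k) + k + 2 ≤ hi ∧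
    G.dist v (c l) + lo + 1 ≤ l ∧ G.dist v (c l) + l ≤ hi)

namespace PulledInto

variable {V : Type*} {G : SimpleGraph V} {c : ℕ → V} {a b lo hi : ℕ} {u v : V}

theorem mono {a' b' lo' hi' : ℕ} (h : PulledInto G c a b lo hi v) (ha : a' ≤ a) (hb : b ≤ b')
    (hlo : lo' ≤ lo) (hhi : hi ≤ hi') : PulledInto G c a' b' lo' hi' v := by
  rcases h with ⟨k, hk⟩ | ⟨k, l, hkl⟩
  · exact Or.inl ⟨k, by omega⟩
  · exact Or.inr ⟨k, l, by omega⟩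

theorem of_adj (h : PulledInto G c a b (lo + 1) hi u) (hvu : G.Adj v u) :
    PulledInto G c a b lo (hi + 1) v := by
  have hd : ∀ x, G.dist v x ≤ G.dist u x + 1 := fun x => by
    have := hvu.reachable.dist_triangle_left x
    rw [SimpleGraph.dist_eq_one_iff_adj.mpr hvu] at this
    omega
  rcases h with ⟨k, hk⟩ | ⟨k, l, hkl⟩
  · have := hd (c k)
    exact Or.inl ⟨k, by omega⟩
  · have := hd (c k)
    have := hd (c l)
    exact Or.inr ⟨k, l, by omega⟩

theorem combine {m p q : ℕ} (hL : PulledInto G c a m lo p v)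
    (hR : PulledInto G c m b q (hi + 1) v)
    (hq : lo + 2 ≤ q) (hp : p < hi) : PulledInto G c a b (lo + 1) hi v := by
  rcases hL with ⟨k, hk⟩ | ⟨k, l, hl⟩ <;> rcases hR with ⟨l', hl'⟩ | ⟨k', l', hk'⟩
  · exact Or.inr ⟨k, l', by omega⟩
  · exact Or.inl ⟨k', by omega⟩
  · exact Or.inl ⟨l, by omega⟩
  · exact Or.inl ⟨l, by omega⟩

theorem pulledBy (h : PulledInto G c a b a (b + 1) v) : PulledBy G c a b v := by
  rcases h with ⟨k, hk⟩ | ⟨k, l, hkl⟩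
  · exact Or.inl ⟨k, by omega⟩
  · exact Or.inr ⟨k, l, by omega⟩

end PulledInto

theorem Finset.inter_pair_eq_empty_iff {α : Type*} [DecidableEq α] {s : Finset α} {a b : α} :
    s ∩ {a, b} = ∅ ↔ a ∉ s ∧ b ∉ s := by
  rw [← Finset.disjoint_iff_inter_eq_empty, Finset.disjoint_insert_right,
    Finset.disjoint_singleton_right]

theorem Finset.eq_singleton_of_subset_pair {α : Type*} [DecidableEq α] {s : Finset α} {a b : α}
    (h : s ⊆ {a, b}) (hne : s.Nonempty) (ha : a ∉ s) : s = {b} := by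
  refine (Finset.subset_singleton_iff.1 fun x hx => ?_).resolve_left hne.ne_empty
  rcases Finset.mem_insert.1 (h hx) with rfl | hx'
  · exact absurd hx ha
  · exact hx'

namespace Pocket

variable {V : Type*} {G : SimpleGraph V} {c : ℕ → V} {Δ : V → Option (Finset ℕ)}

section push

variable {f : V → Finset ℕ} {a b : ℕ} {v : V}

theorem push_eq_none_iff : push G a b f v = none ↔
    {a, b} ⊆ f v ∧ ∀ u, G.Adj u v → (f u ∩ {a, b}).Nonempty := by
  unfold push
  split_ifs <;> simp_all

theorem push_ne_none_cases (h : push G a b f v ≠ none) :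
    a ∉ f v ∨ b ∉ f v ∨ ∃ u, G.Adj u v ∧ f u ∩ {a, b} = ∅ := by
  contrapose! h
  refine push_eq_none_iff.2 ⟨?_, h.2.2⟩
  simp [Finset.insert_subset_iff, h.1, h.2.1]

theorem mem_getD_push_of_mem_lid {T : Finset ℕ} {x : ℕ} (hx : x ∈ ({a, b} : Finset ℕ))
    (hT : {a, b} ⊆ T) : x ∈ (push G a b f v).getD T ↔ x ∈ f v := by
  unfold push
  split_ifs with h₁ h₂
  · simpa using ⟨fun _ => h₁.1 hx, fun _ => hT hx⟩
  · simp [hx]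
  · simp

theorem mem_getD_push_of_not_mem {T : Finset ℕ} {x : ℕ} (hxT : x ∈ T) (hx : x ∉ f v) :
    x ∈ (push G a b f v).getD T ↔ push G a b f v = none := by
  unfold push
  split_ifs <;> simp_all

theorem mem_of_mem_getD_push {T : Finset ℕ} {x : ℕ} (hx : x ∈ (push G a b f v).getD T) :
    x ∈ T ∨ x ∈ f v := by
  unfold push at hx
  split_ifs at hx <;> simp_all

end push

theorem bounds_of_mem_tris : ∀ {a b : ℕ} (P : Pocket a b) {T : Finset ℕ}, T ∈ tris P →
    ∀ x ∈ T, a ≤ x ∧ x ≤ b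
  | _, _, triv _, _, hT => by simp [tris] at hT
  | _, _, node him hmj L R, T, hT => by
    simp only [tris, Set.mem_insert_iff, Set.mem_union] at hT
    rcases hT with rfl | hT | hT
    · simp only [Finset.mem_insert, Finset.mem_singleton]
      omega
    · exact fun x hx => (bounds_of_mem_tris L hT x hx).imp_right (·.trans hmj.le)
    · exact fun x hx => (bounds_of_mem_tris R hT x hx).imp_left (him.le.trans ·)

section triv

variable {a : ℕ} {v : V}

theorem mem_lam_triv_left : a ∈ lam G c (triv a) v ↔ v = c a ∨ v ≠ c (a + 1) := by
  simp only [lam]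
  split_ifs <;> simp_all

theorem mem_lam_triv_right : a + 1 ∈ lam G c (triv a) v ↔ v ≠ c a := by
  simp only [lam]
  split_ifs <;> simp_all

theorem lam_triv_inter_lid_nonempty : (lam G c (triv a) v ∩ {a, a + 1}).Nonempty := by
  by_cases hv : v = c a
  · exact ⟨a, Finset.mem_inter.2 ⟨mem_lam_triv_left.2 (Or.inl hv), by simp⟩⟩
  · exact ⟨a + 1, Finset.mem_inter.2 ⟨mem_lam_triv_right.2 hv, by simp⟩⟩

theorem eq_or_eq_of_lamPlus_triv_ne_none (h : lamPlus G c (triv a) v ≠ none) :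
    v = c a ∨ v = c (a + 1) := by
  rcases push_ne_none_cases h with h | h | ⟨u, -, hu⟩
  · simp only [mem_lam_triv_left, not_or, not_not] at h
    exact Or.inr h.2
  · exact Or.inl (by simpa [mem_lam_triv_right] using h)
  · exact absurd hu lam_triv_inter_lid_nonempty.ne_empty

theorem eq_triv (P : Pocket a (a + 1)) : P = triv a := by
  cases P with
  | triv => rfl
  | node him hmj => omega

theorem eq_left_of_lamPlus_ne_none (P : Pocket a (a + 1)) (ha : a ∈ lam G c P v)
    (h : lamPlus G c P v ≠ none) : v = c a := by
  obtain rfl := P.eq_triv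
  have := mem_lam_triv_left.1 ha
  rcases eq_or_eq_of_lamPlus_triv_ne_none h with h | h <;> tauto

theorem eq_right_of_lamPlus_ne_none (P : Pocket a (a + 1)) (ha : a + 1 ∈ lam G c P v)
    (h : lamPlus G c P v ≠ none) : v = c (a + 1) := by
  obtain rfl := P.eq_triv
  have := mem_lam_triv_right.1 ha
  rcases eq_or_eq_of_lamPlus_triv_ne_none h with h | h <;> tauto

end triv

theorem bounds_of_mem_lam :
    ∀ {a b : ℕ} (P : Pocket a b) (v : V), ∀ x ∈ lam G c P v, a ≤ x ∧ x ≤ b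
  | _, _, triv a, v, x, hx => by
    simp only [lam] at hx
    split_ifs at hx <;> simp at hx <;> omega
  | _, _, node (i := i) (m := m) (j := j) him hmj L R, v, x, hx => by
    have hT : ∀ y ∈ ({i, m, j} : Finset ℕ), i ≤ y ∧ y ≤ j := by simp; omega
    have hA : x ∈ (lamPlus G c L v).getD {i, m, j} → i ≤ x ∧ x ≤ j := fun h =>
      (mem_of_mem_getD_push h).elim (hT x) fun h =>
        (bounds_of_mem_lam L v x h).imp_right (·.trans hmj.le)
    have hB : x ∈ (lamPlus G c R v).getD {i, m, j} → i ≤ x ∧ x ≤ j := fun h =>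
      (mem_of_mem_getD_push h).elim (hT x) fun h =>
        (bounds_of_mem_lam R v x h).imp_left (him.le.trans ·)
    simp only [lam] at hx
    split_ifs at hx
    · exact hA (Finset.mem_inter.1 hx).1
    · exact hA hx
    · exact hB hx
    · simp at hx

section node

variable {i m j : ℕ} {him : i < m} {hmj : m < j} {L : Pocket i m} {R : Pocket m j} {v : V}

theorem mem_lam_node_iff {x : ℕ} (hx : x ∈ ({i, m, j} : Finset ℕ)) :
    x ∈ lam G c (node him hmj L R) v ↔
      x ∈ (lamPlus G c L v).getD {i, m, j} ∧ x ∈ (lamPlus G c R v).getD {i, m, j} := by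
  simp only [lam, lamPlus]
  -- when `Λ` takes one child's value, the other child's value is the whole triangle `{i, m, j}`
  split_ifs with h₁ h₂ h₃
  · exact Finset.mem_inter
  · rw [h₂]; simp [hx]
  · rw [h₃]; simp [hx]
  · simp only [Finset.notMem_empty, false_iff]
    exact fun h => h₁ ⟨x, Finset.mem_inter.2 h⟩

theorem mem_left_lam_node_iff :
    i ∈ lam G c (node him hmj L R) v ↔ i ∈ lam G c L v ∧ lamPlus G c R v = none := by
  have hR : i ∉ lam G c R v := fun h => by have := bounds_of_mem_lam R v i h; omega
  rw [mem_lam_node_iff (by simp)]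
  unfold lamPlus
  rw [mem_getD_push_of_mem_lid (by simp) (by simp [Finset.insert_subset_iff]),
    mem_getD_push_of_not_mem (by simp) hR]

theorem mem_right_lam_node_iff :
    j ∈ lam G c (node him hmj L R) v ↔ lamPlus G c L v = none ∧ j ∈ lam G c R v := by
  have hL : j ∉ lam G c L v := fun h => by have := bounds_of_mem_lam L v j h; omega
  rw [mem_lam_node_iff (by simp)]
  unfold lamPlus
  rw [mem_getD_push_of_not_mem (by simp) hL, mem_getD_push_of_mem_lid (by simp) (by simp)]

end node

theorem Sub.le_and_le {a b i j : ℕ} {P : Pocket a b} {Q : Pocket i j} (h : Sub P Q) :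
    i ≤ a ∧ b ≤ j := by
  induction h <;> omega

theorem Sub.mem_tris {a b i j : ℕ} {P : Pocket a b} {Q : Pocket i j} (h : Sub P Q)
    {T : Finset ℕ} (hT : T ∈ tris Q) {x : ℕ} (hx : x ∈ T) (hax : a < x) (hxb : x < b) :
    T ∈ tris P := by
  induction h with
  | refl => exact hT
  | left him hmj hPL ih =>
    have := hPL.le_and_le
    simp only [tris, Set.mem_insert_iff, Set.mem_union] at hT
    rcases hT with rfl | hT | hT
    · simp only [Finset.mem_insert, Finset.mem_singleton] at hx
      omega
    · exact ih hT
    · have := bounds_of_mem_tris _ hT x hx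
      omega
  | right him hmj hPR ih =>
    have := hPR.le_and_le
    simp only [tris, Set.mem_insert_iff, Set.mem_union] at hT
    rcases hT with rfl | hT | hT
    · simp only [Finset.mem_insert, Finset.mem_singleton] at hx
      omega
    · have := bounds_of_mem_tris _ hT x hx
      omega
    · exact ih hT

/-- The restriction of a sketch to a subpocket with lid `(a, b)`. -/
noncomputable def restrict (a b : ℕ) (Δ : V → Option (Finset ℕ)) (v : V) :
    Option (Finset ℕ) :=
  (Δ v).bind fun s =>
    if ∃ x ∈ s, a < x ∧ x < b then some s
    else if (s ∩ {a, b}).Nonempty then some (s ∩ {a, b}) else none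

def InteriorAt (a b : ℕ) (Δ : V → Option (Finset ℕ)) (v : V) : Prop :=
  ∃ s, Δ v = some s ∧ ∃ x ∈ s, a < x ∧ x < b

section restrict

variable {a b : ℕ} {v : V} {s : Finset ℕ}

theorem restrict_of_eq_none (h : Δ v = none) : restrict a b Δ v = none := by
  simp [restrict, h]

theorem restrict_of_interior (h : Δ v = some s) {x : ℕ} (hx : x ∈ s) (hax : a < x)
    (hxb : x < b) : restrict a b Δ v = some s := by
  simp only [restrict, h, Option.bind_some]
  rw [if_pos ⟨x, hx, hax, hxb⟩]

theorem restrict_of_not_interior (h : Δ v = some s) (hs : ∀ x ∈ s, x ≤ a ∨ b ≤ x) :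
    restrict a b Δ v = if (s ∩ {a, b}).Nonempty then some (s ∩ {a, b}) else none := by
  simp only [restrict, h, Option.bind_some]
  rw [if_neg]
  rintro ⟨x, hx, hax, hxb⟩
  have := hs x hx
  omega

theorem restrict_singleton_of_mem {y : ℕ} (h : Δ v = some {y}) (hay : a ≤ y) (hyb : y ≤ b) :
    restrict a b Δ v = some {y} := by
  by_cases hy : a < y ∧ y < b
  · exact restrict_of_interior h (Finset.mem_singleton_self y) hy.1 hy.2
  · have : {y} ∩ {a, b} = ({y} : Finset ℕ) :=
      Finset.inter_eq_left.2 (Finset.singleton_subset_iff.2 (by simp; omega))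
    rw [restrict_of_not_interior h (by simp; omega), this, if_pos (Finset.singleton_nonempty y)]

theorem restrict_singleton_of_not_mem {y : ℕ} (h : Δ v = some {y}) (hab : a < b)
    (hy : y < a ∨ b < y) :
    restrict a b Δ v = none := by
  have : {y} ∩ {a, b} = (∅ : Finset ℕ) := by
    rw [Finset.inter_pair_eq_empty_iff]
    simp only [Finset.mem_singleton]
    omega
  rw [restrict_of_not_interior h (by simp; omega), this, if_neg Finset.not_nonempty_empty]

theorem restrict_eq_some_cases {s' : Finset ℕ} (h : restrict a b Δ v = some s') :
    (s'.Nonempty ∧ s' ⊆ {a, b} ∧ ∃ s, Δ v = some s ∧ s' ⊆ s) ∨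
      (Δ v = some s' ∧ ∃ x ∈ s', a < x ∧ x < b) := by
  cases hv : Δ v with
  | none => simp [restrict, hv] at h
  | some s =>
    simp only [restrict, hv, Option.bind_some] at h
    split_ifs at h with h₁ h₂
    · cases h
      exact Or.inr ⟨rfl, h₁⟩
    · cases h
      exact Or.inl ⟨h₂, Finset.inter_subset_right, s, rfl, Finset.inter_subset_left⟩

theorem restrict_ne_none_of_mem (h : Δ v = some s) {y : ℕ} (hy : y ∈ s) (hay : a ≤ y)
    (hyb : y ≤ b) : restrict a b Δ v ≠ none := by
  by_cases hint : ∃ x ∈ s, a < x ∧ x < b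
  · obtain ⟨x, hx, hax, hxb⟩ := hint
    simp [restrict_of_interior h hx hax hxb]
  · have : ¬(a < y ∧ y < b) := fun h' => hint ⟨y, hy, h'⟩
    simp only [restrict, h, Option.bind_some, if_neg hint]
    rw [if_pos ⟨y, Finset.mem_inter.2 ⟨hy, by simp; omega⟩⟩]
    simp

theorem restrict_left_of_eq_pair {m j : ℕ} (h : Δ v = some {a, j}) (ham : a < m) (hmj : m < j) :
    restrict a m Δ v = some {a} := by
  have : {a, j} ∩ {a, m} = ({a} : Finset ℕ) := by ext x; simp; omega
  rw [restrict_of_not_interior h (by simp; omega), this, if_pos (Finset.singleton_nonempty a)]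

theorem restrict_right_of_eq_pair {i m : ℕ} (h : Δ v = some {i, b}) (him : i < m) (hmb : m < b) :
    restrict m b Δ v = some {b} := by
  have : {i, b} ∩ {m, b} = ({b} : Finset ℕ) := by ext x; simp; omega
  rw [restrict_of_not_interior h (by simp; omega), this, if_pos (Finset.singleton_nonempty b)]

theorem eq_some_of_restrict_eq_some {s' : Finset ℕ} (h : restrict a b Δ v = some s') {x : ℕ}
    (hx : x ∈ s') (hax : a < x) (hxb : x < b) : Δ v = some s' := by
  rcases restrict_eq_some_cases h with ⟨-, hlid, -⟩ | ⟨hs, -⟩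
  · have := hlid hx
    simp only [Finset.mem_insert, Finset.mem_singleton] at this
    omega
  · exact hs

theorem InteriorAt.of_restrict (h : InteriorAt a b (restrict a b Δ) v) : InteriorAt a b Δ v :=
  let ⟨s, hs, x, hx, hax, hxb⟩ := h
  ⟨s, eq_some_of_restrict_eq_some hs hx hax hxb, x, hx, hax, hxb⟩

theorem InteriorAt.mono {a' b' : ℕ} (h : InteriorAt a b Δ v) (ha : a' ≤ a) (hb : b ≤ b') :
    InteriorAt a' b' Δ v := by
  obtain ⟨s, hs, x, hx, hax, hxb⟩ := h
  exact ⟨s, hs, x, hx, by omega, by omega⟩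

end restrict

section compat

variable {i j : ℕ} {Q : Pocket i j}

theorem Compat.symm {o o' : Option (Finset ℕ)} (h : Compat Q o o') : Compat Q o' o := by
  rcases o with _ | s <;> rcases o' with _ | s' <;> simp only [Compat] at h ⊢
  · exact h
  · exact h
  · exact h.imp And.symm fun ⟨T, hT, hs, hs'⟩ => ⟨T, hT, hs', hs⟩

theorem compat_of_subset_lid {o o' : Option (Finset ℕ)} (ho : ∀ s, o = some s → s ⊆ {i, j})
    (ho' : ∀ s, o' = some s → s ⊆ {i, j}) : Compat Q o o' := by
  rcases o with _ | s <;> rcases o' with _ | s' <;> simp only [Compat]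
  · exact ho' s' rfl
  · exact ho s rfl
  · exact Or.inl ⟨ho s rfl, ho' s' rfl⟩

theorem exists_tris_of_compat {a b : ℕ} {P : Pocket a b} (hPQ : Sub P Q) {s : Finset ℕ}
    {o : Option (Finset ℕ)} (h : Compat Q (some s) o) {x : ℕ} (hx : x ∈ s) (hax : a < x)
    (hxb : x < b) : ∃ s' T, o = some s' ∧ T ∈ tris P ∧ s ⊆ T ∧ s' ⊆ T := by
  obtain ⟨hia, hbj⟩ := hPQ.le_and_le
  have hxlid : x ∉ ({i, j} : Finset ℕ) := by simp; omega
  rcases o with _ | s'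
  · exact absurd ((show s ⊆ {i, j} from h) hx) hxlid
  · rcases h with ⟨hs, -⟩ | ⟨T, hT, hs, hs'⟩
    · exact absurd (hs hx) hxlid
    · exact ⟨s', T, rfl, hPQ.mem_tris hT (hs hx) hax hxb, hs, hs'⟩

end compat

namespace IsLocalSketch

variable {i j : ℕ} {Q : Pocket i j}

theorem subset_lid (hΔ : IsLocalSketch G c Q Δ) {v : V} {s : Finset ℕ} (hs : Δ v = some s)
    (hint : ¬InteriorAt i j Δ v) : s ⊆ {i, j} := by
  rcases (hΔ.2.1 v s hs).2 with hlid | ⟨T, hT, hsT⟩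
  · exact hlid
  · intro x hx
    have := bounds_of_mem_tris Q hT x (hsT hx)
    have : ¬(i < x ∧ x < j) := fun h => hint ⟨s, hs, x, hx, h⟩
    simp only [Finset.mem_insert, Finset.mem_singleton]
    omega

variable {a b : ℕ} {P : Pocket a b}

theorem compat_restrict_of_interior (hΔ : IsLocalSketch G c Q Δ) (hPQ : Sub P Q) {u v : V}
    (huv : G.Adj u v) {s : Finset ℕ} (hs : restrict a b Δ u = some s) {x : ℕ} (hx : x ∈ s)
    (hax : a < x) (hxb : x < b) : Compat P (some s) (restrict a b Δ v) := by
  have hc := hΔ.2.2 u v huv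
  rw [eq_some_of_restrict_eq_some hs hx hax hxb] at hc
  obtain ⟨s', T, hs', hT, hsT, hs'T⟩ := exists_tris_of_compat hPQ hc hx hax hxb
  cases hr : restrict a b Δ v with
  | none =>
    obtain ⟨y, hy⟩ := (hΔ.2.1 v s' hs').1
    have := bounds_of_mem_tris P hT y (hs'T hy)
    exact absurd hr (restrict_ne_none_of_mem hs' hy this.1 this.2)
  | some s'' =>
    have hs'' : s'' ⊆ s' := by
      rcases restrict_eq_some_cases hr with ⟨-, -, s₀, hs₀, hsub⟩ | ⟨hs'', -⟩
      · obtain rfl := Option.some_inj.1 (hs'.symm.trans hs₀)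
        exact hsub
      · obtain rfl := Option.some_inj.1 (hs'.symm.trans hs'')
        exact subset_rfl
    exact Or.inr ⟨T, hT, hsT, hs''.trans hs'T⟩

theorem restrict_of_sub (hΔ : IsLocalSketch G c Q Δ) (hPQ : Sub P Q) :
    IsLocalSketch G c P (restrict a b Δ) := by
  obtain ⟨hia, hbj⟩ := hPQ.le_and_le
  refine ⟨fun ℓ haℓ hℓb =>
      restrict_singleton_of_mem (hΔ.1 ℓ (by omega) (by omega)) haℓ hℓb,
    fun v s hs => ?_, fun u v huv => ?_⟩
  · rcases restrict_eq_some_cases hs with ⟨hne, hlid, -⟩ | ⟨hs, x, hx, hax, hxb⟩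
    · exact ⟨hne, Or.inl hlid⟩
    · refine ⟨(hΔ.2.1 v s hs).1, Or.inr ?_⟩
      rcases (hΔ.2.1 v s hs).2 with hlid | ⟨T, hT, hsT⟩
      · have := hlid hx
        simp only [Finset.mem_insert, Finset.mem_singleton] at this
        omega
      · exact ⟨T, hPQ.mem_tris hT (hsT hx) hax hxb, hsT⟩
  · by_cases hu : InteriorAt a b (restrict a b Δ) u
    · obtain ⟨s, hs, x, hx, hax, hxb⟩ := hu
      rw [hs]
      exact hΔ.compat_restrict_of_interior hPQ huv hs hx hax hxb
    by_cases hv : InteriorAt a b (restrict a b Δ) v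
    · obtain ⟨s, hs, x, hx, hax, hxb⟩ := hv
      rw [hs]
      exact (hΔ.compat_restrict_of_interior hPQ huv.symm hs hx hax hxb).symm
    have hlid : ∀ w, ¬InteriorAt a b (restrict a b Δ) w →
        ∀ s, restrict a b Δ w = some s → s ⊆ {a, b} := fun w hw s hs =>
      (restrict_eq_some_cases hs).elim (·.2.1) fun h => absurd ⟨s, hs, h.2⟩ hw
    exact compat_of_subset_lid (hlid u hu) (hlid v hv)

end IsLocalSketch

/-- `Λ_P` places every vertex at least as far towards the lid as the sketch `Δ` does. -/
structure CanonicalDominates {a b : ℕ} (G : SimpleGraph V) (c : ℕ → V) (P : Pocket a b)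
    (Δ : V → Option (Finset ℕ)) : Prop where
  interiorAt_of_lam : ∀ u, lam G c P u ∩ {a, b} = ∅ → InteriorAt a b Δ u
  lamPlus_eq_none : ∀ u, Δ u = none → lamPlus G c P u = none
  left_mem_lam : ∀ u, Δ u = some {a} → a ∈ lam G c P u
  right_mem_lam : ∀ u, Δ u = some {b} → b ∈ lam G c P u
  left_pinned : ∀ u, a ∈ lam G c P u → lamPlus G c P u ≠ none →
    u = c a ∨ ∃ w, G.Adj w u ∧ InteriorAt a b Δ w
  right_pinned : ∀ u, b ∈ lam G c P u → lamPlus G c P u ≠ none →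
    u = c b ∨ ∃ w, G.Adj w u ∧ InteriorAt a b Δ w

theorem canonicalDominates_triv {a : ℕ} (hΔ : IsLocalSketch G c (triv a) Δ) :
    CanonicalDominates G c (triv a) Δ where
  interiorAt_of_lam u hu := absurd hu lam_triv_inter_lid_nonempty.ne_empty
  lamPlus_eq_none u hu := by
    have ha : u ≠ c a := fun h => by simp [h, hΔ.1 a le_rfl (by omega)] at hu
    have ha' : u ≠ c (a + 1) := fun h => by simp [h, hΔ.1 (a + 1) (by omega) le_rfl] at hu
    refine push_eq_none_iff.2 ⟨?_, fun w _ => lam_triv_inter_lid_nonempty⟩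
    simp [Finset.insert_subset_iff, mem_lam_triv_left, mem_lam_triv_right, ha, ha']
  left_mem_lam u hu := by
    refine mem_lam_triv_left.2 (or_iff_not_imp_right.2 fun h => ?_)
    rw [not_not] at h
    simp [h, hΔ.1 (a + 1) (by omega) le_rfl] at hu
  right_mem_lam u hu := by
    refine mem_lam_triv_right.2 fun h => ?_
    simp [h, hΔ.1 a le_rfl (by omega)] at hu
  left_pinned u ha hne := Or.inl (eq_left_of_lamPlus_ne_none _ ha hne)
  right_pinned u hb hne := Or.inl (eq_right_of_lamPlus_ne_none _ hb hne)

section node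

variable {i m j : ℕ} {him : i < m} {hmj : m < j} {L : Pocket i m} {R : Pocket m j}

theorem CanonicalDominates.left_mem_lam_node (hL : CanonicalDominates G c L (restrict i m Δ))
    (hR : CanonicalDominates G c R (restrict m j Δ)) {u : V} (hu : Δ u = some {i}) :
    i ∈ lam G c (node him hmj L R) u :=
  mem_left_lam_node_iff.2 ⟨hL.left_mem_lam u (restrict_singleton_of_mem hu le_rfl him.le),
    hR.lamPlus_eq_none u (restrict_singleton_of_not_mem hu hmj (Or.inl him))⟩

theorem CanonicalDominates.right_mem_lam_node (hL : CanonicalDominates G c L (restrict i m Δ))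
    (hR : CanonicalDominates G c R (restrict m j Δ)) {u : V} (hu : Δ u = some {j}) :
    j ∈ lam G c (node him hmj L R) u :=
  mem_right_lam_node_iff.2
    ⟨hL.lamPlus_eq_none u (restrict_singleton_of_not_mem hu him (Or.inr hmj)),
      hR.right_mem_lam u (restrict_singleton_of_mem hu hmj.le le_rfl)⟩

theorem CanonicalDominates.interiorAt_of_lam_node (hΔ : IsLocalSketch G c (node him hmj L R) Δ)
    (hL : CanonicalDominates G c L (restrict i m Δ))
    (hR : CanonicalDominates G c R (restrict m j Δ)) {u : V}
    (hu : lam G c (node him hmj L R) u ∩ {i, j} = ∅) : InteriorAt i j Δ u := by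
  obtain ⟨hi, hj⟩ := Finset.inter_pair_eq_empty_iff.1 hu
  cases hσ : Δ u with
  | none =>
    have hLn := hL.lamPlus_eq_none u (restrict_of_eq_none hσ)
    exact absurd (mem_left_lam_node_iff.2 ⟨(push_eq_none_iff.1 hLn).1 (by simp),
      hR.lamPlus_eq_none u (restrict_of_eq_none hσ)⟩) hi
  | some σ =>
    by_contra hint
    have hσlid := hΔ.subset_lid hσ hint
    have hσne := (hΔ.2.1 u σ hσ).1
    have hiσ : i ∈ σ := by
      by_contra hiσ
      rw [Finset.eq_singleton_of_subset_pair hσlid hσne hiσ] at hσ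
      exact hj (hL.right_mem_lam_node hR hσ)
    have hjσ : j ∈ σ := by
      by_contra hjσ
      rw [Finset.pair_comm] at hσlid
      rw [Finset.eq_singleton_of_subset_pair hσlid hσne hjσ] at hσ
      exact hi (hL.left_mem_lam_node hR hσ)
    obtain rfl : σ = {i, j} := hσlid.antisymm (by simp [Finset.insert_subset_iff, hiσ, hjσ])
    have hiL := hL.left_mem_lam u (restrict_left_of_eq_pair hσ him hmj)
    have hjR := hR.right_mem_lam u (restrict_right_of_eq_pair hσ him hmj)
    have hLne : lamPlus G c L u ≠ none := fun h => hj (mem_right_lam_node_iff.2 ⟨h, hjR⟩)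
    rcases hL.left_pinned u hiL hLne with rfl | ⟨w, hw, hwint⟩
    · rw [hΔ.1 i le_rfl (by omega), Option.some_inj] at hσ
      have : j ∈ ({i} : Finset ℕ) := hσ ▸ hjσ
      simp only [Finset.mem_singleton] at this
      omega
    · obtain ⟨τ, hτ, x, hx, hix, hxm⟩ := hwint.of_restrict
      have hc := hΔ.2.2 w u hw
      rw [hτ, hσ] at hc
      obtain ⟨_, T, hs, hT, -, hσT⟩ :=
        exists_tris_of_compat (Sub.left him hmj (Sub.refl L)) hc hx hix hxm
      cases hs
      have := bounds_of_mem_tris L hT j (hσT (by simp))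
      omega

theorem CanonicalDominates.lamPlus_eq_none_node (hΔ : IsLocalSketch G c (node him hmj L R) Δ)
    (hL : CanonicalDominates G c L (restrict i m Δ))
    (hR : CanonicalDominates G c R (restrict m j Δ)) {u : V} (hu : Δ u = none) :
    lamPlus G c (node him hmj L R) u = none := by
  have hLn := hL.lamPlus_eq_none u (restrict_of_eq_none hu)
  have hRn := hR.lamPlus_eq_none u (restrict_of_eq_none hu)
  refine push_eq_none_iff.2 ⟨?_, fun w hw => ?_⟩
  · rw [Finset.insert_subset_iff, Finset.singleton_subset_iff, mem_left_lam_node_iff,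
      mem_right_lam_node_iff]
    exact ⟨⟨(push_eq_none_iff.1 hLn).1 (by simp), hRn⟩,
      hLn, (push_eq_none_iff.1 hRn).1 (by simp)⟩
  · rw [Finset.nonempty_iff_ne_empty]
    intro hw'
    obtain ⟨τ, hτ, x, hx, hix, hxj⟩ := hL.interiorAt_of_lam_node hΔ hR hw'
    have hc := hΔ.2.2 w u hw
    rw [hτ, hu] at hc
    have := (show τ ⊆ {i, j} from hc) hx
    simp only [Finset.mem_insert, Finset.mem_singleton] at this
    omega

theorem CanonicalDominates.left_pinned_node (hΔ : IsLocalSketch G c (node him hmj L R) Δ)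
    (hL : CanonicalDominates G c L (restrict i m Δ))
    (hR : CanonicalDominates G c R (restrict m j Δ)) {u : V}
    (hi : i ∈ lam G c (node him hmj L R) u) (hne : lamPlus G c (node him hmj L R) u ≠ none) :
    u = c i ∨ ∃ w, G.Adj w u ∧ InteriorAt i j Δ w := by
  obtain ⟨hiL, hRn⟩ := mem_left_lam_node_iff.1 hi
  rcases push_ne_none_cases hne with hi' | hj | ⟨w, hw, hw'⟩
  · exact absurd hi hi'
  · have hLne : lamPlus G c L u ≠ none := fun hLn =>
      hj (mem_right_lam_node_iff.2 ⟨hLn, (push_eq_none_iff.1 hRn).1 (by simp)⟩)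
    exact (hL.left_pinned u hiL hLne).imp_right
      fun ⟨w, hw, hint⟩ => ⟨w, hw, hint.of_restrict.mono le_rfl hmj.le⟩
  · exact Or.inr ⟨w, hw, hL.interiorAt_of_lam_node hΔ hR hw'⟩

theorem CanonicalDominates.right_pinned_node (hΔ : IsLocalSketch G c (node him hmj L R) Δ)
    (hL : CanonicalDominates G c L (restrict i m Δ))
    (hR : CanonicalDominates G c R (restrict m j Δ)) {u : V}
    (hj : j ∈ lam G c (node him hmj L R) u) (hne : lamPlus G c (node him hmj L R) u ≠ none) :
    u = c j ∨ ∃ w, G.Adj w u ∧ InteriorAt i j Δ w := by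
  obtain ⟨hLn, hjR⟩ := mem_right_lam_node_iff.1 hj
  rcases push_ne_none_cases hne with hi | hj' | ⟨w, hw, hw'⟩
  · have hRne : lamPlus G c R u ≠ none := fun hRn =>
      hi (mem_left_lam_node_iff.2 ⟨(push_eq_none_iff.1 hLn).1 (by simp), hRn⟩)
    exact (hR.right_pinned u hjR hRne).imp_right
      fun ⟨w, hw, hint⟩ => ⟨w, hw, hint.of_restrict.mono him.le le_rfl⟩
  · exact absurd hj hj'
  · exact Or.inr ⟨w, hw, hL.interiorAt_of_lam_node hΔ hR hw'⟩

theorem CanonicalDominates.node (hΔ : IsLocalSketch G c (node him hmj L R) Δ)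
    (hL : CanonicalDominates G c L (restrict i m Δ))
    (hR : CanonicalDominates G c R (restrict m j Δ)) :
    CanonicalDominates G c (node him hmj L R) Δ where
  interiorAt_of_lam _ := hL.interiorAt_of_lam_node hΔ hR
  lamPlus_eq_none _ := hL.lamPlus_eq_none_node hΔ hR
  left_mem_lam _ := hL.left_mem_lam_node hR
  right_mem_lam _ := hL.right_mem_lam_node hR
  left_pinned _ := hL.left_pinned_node hΔ hR
  right_pinned _ := hL.right_pinned_node hΔ hR

end node

theorem IsLocalSketch.canonicalDominates {a b : ℕ} {P : Pocket a b}
    (hΔ : IsLocalSketch G c P Δ) :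
    CanonicalDominates G c P Δ := by
  induction P generalizing Δ with
  | triv a => exact canonicalDominates_triv hΔ
  | node him hmj L R ihL ihR =>
    exact .node hΔ (ihL (hΔ.restrict_of_sub (.left him hmj (.refl L))))
      (ihR (hΔ.restrict_of_sub (.right him hmj (.refl R))))

theorem IsLocalSketch.not_adj_of_lam_inter_lid_eq_empty {i j a b y : ℕ} {Q : Pocket i j}
    {P : Pocket a b} (hΔ : IsLocalSketch G c Q Δ) (hPQ : Sub P Q) {u : V}
    (hu : lam G c P u ∩ {a, b} = ∅) (hiy : i ≤ y) (hyj : y ≤ j) (hy : y < a ∨ b < y) :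
    ¬G.Adj u (c y) := by
  intro hadj
  obtain ⟨σ, hσ, x, hx, hax, hxb⟩ :=
    ((hΔ.restrict_of_sub hPQ).canonicalDominates.interiorAt_of_lam u hu).of_restrict
  have hc := hΔ.2.2 u (c y) hadj
  rw [hσ, hΔ.1 y hiy hyj] at hc
  obtain ⟨_, T, hs, hT, -, hyT⟩ := exists_tris_of_compat hPQ hc hx hax hxb
  cases hs
  have := bounds_of_mem_tris P hT y (hyT (Finset.mem_singleton_self y))
  omega

/-- Each lid corner missing from `Λ_P(v)` moves that end of the window pulling `v` inwards by
one. -/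
structure PullsMissing {a b : ℕ} (G : SimpleGraph V) (c : ℕ → V) (P : Pocket a b) : Prop where
  of_right_not_mem : ∀ v, b ∉ lam G c P v → PulledInto G c a b a b v
  of_left_not_mem : ∀ v, a ∉ lam G c P v → PulledInto G c a b (a + 1) (b + 1) v
  of_lid_not_mem : ∀ v, a ∉ lam G c P v → b ∉ lam G c P v → PulledInto G c a b (a + 1) b v

theorem PullsMissing.pulledInto_of_lamPlus_ne_none {a b : ℕ} {P : Pocket a b}
    (hP : PullsMissing G c P) {v : V} (h : lamPlus G c P v ≠ none) :
    PulledInto G c a b a (b + 1) v := by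
  rcases push_ne_none_cases h with ha | hb | ⟨u, hu, hu'⟩
  · exact (hP.of_left_not_mem v ha).mono le_rfl le_rfl (by omega) le_rfl
  · exact (hP.of_right_not_mem v hb).mono le_rfl le_rfl le_rfl (by omega)
  · obtain ⟨ha, hb⟩ := Finset.inter_pair_eq_empty_iff.1 hu'
    exact (hP.of_lid_not_mem u ha hb).of_adj hu.symm

theorem pullsMissing_triv (a : ℕ) : PullsMissing G c (triv a) where
  of_right_not_mem v hv := by
    obtain rfl : v = c a := not_not.1 (mt mem_lam_triv_right.2 hv)
    exact Or.inl ⟨a, le_rfl, by omega, by simp, by simp⟩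
  of_left_not_mem v hv := by
    simp only [mem_lam_triv_left, not_or, not_not] at hv
    obtain rfl := hv.2
    exact Or.inl ⟨a + 1, by omega, le_rfl, by simp, by simp⟩
  of_lid_not_mem v ha hb := by
    simp only [mem_lam_triv_left, mem_lam_triv_right, not_or, not_not] at ha hb
    exact absurd hb ha.1

section node

variable {i m j : ℕ} {him : i < m} {hmj : m < j} {L : Pocket i m} {R : Pocket m j} {v : V}

theorem PullsMissing.exists_left_window (hΔ : IsLocalSketch G c (node him hmj L R) Δ)
    (hL : PullsMissing G c L) (hiL : i ∈ lam G c L v) (hLne : lamPlus G c L v ≠ none)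
    (hjR : j ∈ lam G c R v) (hRne : lamPlus G c R v ≠ none) :
    ∃ p, p < j ∧ PulledInto G c i m i p v := by
  rcases push_ne_none_cases hLne with hi | hm | ⟨u, hu, hu'⟩
  · exact absurd hiL hi
  · exact ⟨m, hmj, hL.of_right_not_mem v hm⟩
  · obtain ⟨hi, hm⟩ := Finset.inter_pair_eq_empty_iff.1 hu'
    refine ⟨m + 1, ?_, (hL.of_lid_not_mem u hi hm).of_adj hu.symm⟩
    -- otherwise `v = c_j`, and no sketch places a neighbour of `c_j` strictly inside `L`
    by_contra hjm
    obtain rfl : j = m + 1 := by omega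
    have hv := eq_right_of_lamPlus_ne_none R hjR hRne
    exact hΔ.not_adj_of_lam_inter_lid_eq_empty (.left him hmj (.refl L)) hu' (y := m + 1)
      (by omega) le_rfl (Or.inr hmj) (hv ▸ hu)

theorem PullsMissing.exists_right_window (hΔ : IsLocalSketch G c (node him hmj L R) Δ)
    (hR : PullsMissing G c R) (hiL : i ∈ lam G c L v) (hLne : lamPlus G c L v ≠ none)
    (hjR : j ∈ lam G c R v) (hRne : lamPlus G c R v ≠ none) :
    ∃ q, i + 2 ≤ q ∧ PulledInto G c m j q (j + 1) v := by
  rcases push_ne_none_cases hRne with hm | hj | ⟨u, hu, hu'⟩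
  · exact ⟨m + 1, by omega, hR.of_left_not_mem v hm⟩
  · exact absurd hjR hj
  · obtain ⟨hm, hj⟩ := Finset.inter_pair_eq_empty_iff.1 hu'
    refine ⟨m, ?_, (hR.of_lid_not_mem u hm hj).of_adj hu.symm⟩
    -- otherwise `v = c_i`, and no sketch places a neighbour of `c_i` strictly inside `R`
    by_contra hmi
    obtain rfl : m = i + 1 := by omega
    have hv := eq_left_of_lamPlus_ne_none L hiL hLne
    exact hΔ.not_adj_of_lam_inter_lid_eq_empty (.right him hmj (.refl R)) hu' (y := i)
      le_rfl (by omega) (Or.inl him) (hv ▸ hu)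

theorem PullsMissing.node (hΔ : IsLocalSketch G c (node him hmj L R) Δ)
    (hL : PullsMissing G c L) (hR : PullsMissing G c R) :
    PullsMissing G c (node him hmj L R) where
  of_right_not_mem v hj := by
    by_cases hjR : j ∈ lam G c R v
    · have hLne : lamPlus G c L v ≠ none := fun h => hj (mem_right_lam_node_iff.2 ⟨h, hjR⟩)
      exact (hL.pulledInto_of_lamPlus_ne_none hLne).mono le_rfl hmj.le le_rfl hmj
    · exact (hR.of_right_not_mem v hjR).mono him.le le_rfl him.le le_rfl
  of_left_not_mem v hi := by
    by_cases hiL : i ∈ lam G c L v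
    · have hRne : lamPlus G c R v ≠ none := fun h => hi (mem_left_lam_node_iff.2 ⟨hiL, h⟩)
      exact (hR.pulledInto_of_lamPlus_ne_none hRne).mono him.le le_rfl him le_rfl
    · exact (hL.of_left_not_mem v hiL).mono le_rfl hmj.le le_rfl (by omega)
  of_lid_not_mem v hi hj := by
    by_cases hiL : i ∈ lam G c L v
    swap
    · exact (hL.of_left_not_mem v hiL).mono le_rfl hmj.le le_rfl hmj
    by_cases hjR : j ∈ lam G c R v
    swap
    · exact (hR.of_right_not_mem v hjR).mono him.le le_rfl him le_rfl
    have hLne : lamPlus G c L v ≠ none := fun h => hj (mem_right_lam_node_iff.2 ⟨h, hjR⟩)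
    have hRne : lamPlus G c R v ≠ none := fun h => hi (mem_left_lam_node_iff.2 ⟨hiL, h⟩)
    obtain ⟨p, hpj, hp⟩ := hL.exists_left_window hΔ hiL hLne hjR hRne
    obtain ⟨q, hiq, hq⟩ := hR.exists_right_window hΔ hiL hLne hjR hRne
    exact hp.combine hq hiq hpj

end node

theorem HasSketch.pullsMissing {a b : ℕ} {P : Pocket a b} (hP : HasSketch G c P) :
    PullsMissing G c P := by
  induction P with
  | triv a => exact pullsMissing_triv a
  | node him hmj L R ihL ihR =>
    obtain ⟨Δ, hΔ⟩ := hP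
    exact .node hΔ (ihL ⟨_, hΔ.restrict_of_sub (.left him hmj (.refl L))⟩)
      (ihR ⟨_, hΔ.restrict_of_sub (.right him hmj (.refl R))⟩)

end Pocket

open Pocket in
theorem stmt6_general {V : Type*} (G : SimpleGraph V) (c : ℕ → V) (i j : ℕ) (Q : Pocket i j)
    (hQ : HasSketch G c Q) (v : V) (h : lamPlus G c Q v ≠ none) : PulledBy G c i j v :=
  (hQ.pullsMissing.pulledInto_of_lamPlus_ne_none h).pulledBy

open Pocket in
/-- If a sketchable pocket `Q = Q_{(p_i,p_j)}` (`i < j < i + t`) has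
`Λ⁺_Q(v) ≠ T_Q^+` for some vertex `v`, then `v` is pulled by `Q`. -/
theorem stmt6 {V : Type*} (G : SimpleGraph V) (t : ℕ) (c : ℕ → V)
    (hadj : ∀ ℓ, G.Adj (c ℓ) (c (ℓ + 1)))
    (i j : ℕ) (hij : i < j) (hjt : j < i + t)
    (Q : Pocket i j) (hQ : HasSketch G c Q)
    (v : V) (h : lamPlus G c Q v ≠ none) :
    PulledBy G c i j v :=
  stmt6_general G c i j Q hQ v h
end

section
/- Let G be a graph with cycle C = [c_1,...,c_t] and let i ≤ k < m < l' ≤ j with j − i ≤ t − 2. If d_G(v,c_k) ≤ min(m−k−1, k−i) and d_G(v,c_{l'}) ≤ min(l'−m−1, j−l'+1), then d_G(c_k,c_{l'}) ≤ min(l'−k−2, k+t−1−l') < min(l'−k, k+t−l') = d_C(c_k,c_{l'}), so the Pair Condition d_C(c_a,c_b) ≤ d_G(c_a,c_b) fails for the pair (c_k, c_{l'}). -/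
theorem SimpleGraph.Connected.dist_le_add_of_dist_le {V : Type*} {G : SimpleGraph V}
    (hG : G.Connected) {u v w : V} {a b : ℕ} (hu : G.dist v u ≤ a) (hw : G.dist v w ≤ b) :
    G.dist u w ≤ a + b :=
  calc G.dist u w ≤ G.dist u v + G.dist v w := hG.dist_triangle
    _ = G.dist v u + G.dist v w := by rw [SimpleGraph.dist_comm]
    _ ≤ a + b := add_le_add hu hw

theorem stmt15_general {V : Type*} (G : SimpleGraph V) (hG : G.Connected)
    (t : ℕ) (c : ℕ → V)
    (v : V) (i k m l' j : ℕ)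
    (hik : i ≤ k) (hkm : k < m) (hml : m < l') (hlj : l' ≤ j)
    (hjt : j + 2 ≤ i + t)
    (h1 : G.dist v (c k) ≤ min (m - k - 1) (k - i))
    (h2 : G.dist v (c l') ≤ min (l' - m - 1) (j - l' + 1)) :
    G.dist (c k) (c l') ≤ min (l' - k - 2) (k + t - 1 - l') ∧
    min (l' - k - 2) (k + t - 1 - l') < min (l' - k) (k + t - l') ∧
    G.dist (c k) (c l') < min (l' - k) (k + t - l') := by
  have hdist := hG.dist_le_add_of_dist_le h1 h2
  -- The two sums of bounds are `l' - k - 2` and `k + j - i + 1 - l' ≤ k + t - 1 - l'`.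
  omega

/-- Case (1)(b) of the arc-pocket-sketch lemma: if
`d_G(v,c_k) ≤ min(m−k−1, k−i)` and `d_G(v,c_{l'}) ≤ min(l'−m−1, j−l'+1)` for indices
`i ≤ k < m < l' ≤ j` with `j − i ≤ t − 2`, then
`d_G(c_k,c_{l'}) ≤ min(l'−k−2, k+t−1−l') < min(l'−k, k+t−l') = d_C(c_k,c_{l'})`,
so the Pair Condition fails for the pair `(c_k, c_{l'})`. -/
theorem stmt15 {V : Type*} (G : SimpleGraph V) (hG : G.Connected)
    (t : ℕ) (c : ℕ → V)
    (hadj : ∀ ℓ, G.Adj (c ℓ) (c (ℓ + 1)))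
    (v : V) (i k m l' j : ℕ)
    (hik : i ≤ k) (hkm : k < m) (hml : m < l') (hlj : l' ≤ j)
    (hjt : j + 2 ≤ i + t)
    (h1 : G.dist v (c k) ≤ min (m - k - 1) (k - i))
    (h2 : G.dist v (c l') ≤ min (l' - m - 1) (j - l' + 1)) :
    G.dist (c k) (c l') ≤ min (l' - k - 2) (k + t - 1 - l') ∧
    min (l' - k - 2) (k + t - 1 - l') < min (l' - k) (k + t - l') ∧
    G.dist (c k) (c l') < min (l' - k) (k + t - l') :=
  stmt15_general G hG t c v i k m l' j hik hkm hml hlj hjt h1 h2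
end
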